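/- arXiv:1708.00732 — 2 statements merged into one kernel-verified Lean document; each statement's English description precedes it below -/
import Mathlib

section
/- Let x: [0,∞) → ℝ be càdlàg and let x^ε be a càdlàg path of locally finite total variation with sup_{s≥0} |x_s − x^ε_s| ≤ ε. Fix t > 0 and define ⟨x⟩^ε_s := 2 ∫_{(0,s]} (x_u − x^ε_u) dx^ε_u for s ∈ [0,t]. Then every jump of the càdlàg function s ↦ ⟨x⟩^ε_s on (0,t] satisfies |Δ⟨x⟩^ε_s| ≤ 2ε · ( sup_{0<u≤t} |Δx_u| + 2ε ). -/
open MeasureTheory Filter Topology Set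
open scoped Classical

noncomputable section

/-- The jump `Δf_s = f s - f (s-)` of a path at a point. -/
def jmp (f : ℝ → ℝ) (s : ℝ) : ℝ := f s - Function.leftLim f s

/-- A path `f : ℝ → ℝ` (thought of as a path on `[0,∞)`) is càdlàg: right-continuous at
every `t ≥ 0` and with finite left limits at every `t > 0`. -/
def Cadlag (f : ℝ → ℝ) : Prop :=
  (∀ t : ℝ, 0 ≤ t → ContinuousWithinAt f (Ici t) t) ∧
    ∀ t : ℝ, 0 < t → Tendsto f (𝓝[<] t) (𝓝 (Function.leftLim f t))

/-- `p = (u, v)` is a decomposition of `y` on `[0,∞)` as a difference of two nondecreasing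
right-continuous functions. -/
def IsBVDecompOn (y : ℝ → ℝ) (p : StieltjesFunction ℝ × StieltjesFunction ℝ) : Prop :=
  ∀ s : ℝ, 0 ≤ s → y s = p.1 s - p.2 s

/-- `y` has locally finite total variation on `[0,∞)`: for right-continuous `y` with left
limits this is equivalent to admitting a Jordan decomposition `y = u - v` with `u, v`
nondecreasing and right-continuous. -/
def LocBV (y : ℝ → ℝ) : Prop := ∃ p, IsBVDecompOn y p

/-- The Lebesgue–Stieltjes integral `∫_{(0,t]} g dy` of `g` with respect to the signed
Lebesgue–Stieltjes measure `μ_u - μ_v`, where `y = u - v` with `u, v` nondecreasing and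
right-continuous.  (For integrable `g` its value does not depend on the choice of the
decomposition.) -/
def lsInt (y g : ℝ → ℝ) (t : ℝ) : ℝ :=
  if h : ∃ p, IsBVDecompOn y p then
    (∫ s in Ioc (0:ℝ) t, g s ∂(h.choose.1.measure)) -
      ∫ s in Ioc (0:ℝ) t, g s ∂(h.choose.2.measure)
  else 0

/-- The integral `∫_{(0,t]} |g| |dy|` of `|g|` with respect to the total variation measure of
the signed Lebesgue–Stieltjes measure of `y`; it is computed from a minimal (mutually
singular on `(0,∞)`) decomposition of `y`, for which the total variation measure is
`μ_u + μ_v`. -/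
def lsAbs (y g : ℝ → ℝ) (t : ℝ) : ℝ :=
  if h : ∃ p, IsBVDecompOn y p ∧
      (p.1.measure.restrict (Ioi 0)).MutuallySingular (p.2.measure.restrict (Ioi 0)) then
    ∫ s in Ioc (0:ℝ) t, |g s| ∂(h.choose.1.measure + h.choose.2.measure)
  else 0

/-- The truncated variation of `x` on `[a,b]` with truncation parameter `ε`. -/
def TTV (x : ℝ → ℝ) (a b ε : ℝ) : ℝ :=
  sSup {v : ℝ | ∃ (n : ℕ) (t : ℕ → ℝ), a ≤ t 0 ∧ t n ≤ b ∧ (∀ i, i < n → t i < t (i + 1)) ∧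
    v = ∑ i ∈ Finset.range n, max (|x (t (i + 1)) - x (t i)| - ε) 0}

/-- The upward truncated variation of `x` on `[a,b]` with truncation parameter `ε`. -/
def UTV (x : ℝ → ℝ) (a b ε : ℝ) : ℝ :=
  sSup {v : ℝ | ∃ (n : ℕ) (t : ℕ → ℝ), a ≤ t 0 ∧ t n ≤ b ∧ (∀ i, i < n → t i < t (i + 1)) ∧
    v = ∑ i ∈ Finset.range n, max (x (t (i + 1)) - x (t i) - ε) 0}

/-- The downward truncated variation of `x` on `[a,b]` with truncation parameter `ε`. -/
def DTV (x : ℝ → ℝ) (a b ε : ℝ) : ℝ :=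
  sSup {v : ℝ | ∃ (n : ℕ) (t : ℕ → ℝ), a ≤ t 0 ∧ t n ≤ b ∧ (∀ i, i < n → t i < t (i + 1)) ∧
    v = ∑ i ∈ Finset.range n, max (x (t i) - x (t (i + 1)) - ε) 0}

/-- The standing assumptions: `x` is càdlàg with `Σ_{0<s≤t} (Δx_s)² < ∞` for all `t > 0`;
`𝒳 = (xe ε)_{ε>0}` is a family of càdlàg paths of locally finite total variation with
`sup_{s ≥ 0} |x s - xe ε s| ≤ ε`; `q = ⟨x⟩` is the uniform-on-compacts limit of
`2 ∫_{(0,·]} (x - xe ε) d(xe ε)` as `ε → 0+`;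
`sup_{ε>0} ∫_{(0,t]} |x - xe ε| |d(xe ε)| < ∞` for every `t > 0`; and there is a constant
`K` with `|Δ(xe ε)_s| ≤ K |Δx_s|` for all `s > 0` and `ε > 0`. -/
structure StandingAssumptions (x : ℝ → ℝ) (xe : ℝ → ℝ → ℝ) (q : ℝ → ℝ) : Prop where
  cadlag_x : Cadlag x
  jumps_sq_summable : ∀ t : ℝ, 0 < t → Summable fun s : Ioc (0:ℝ) t => jmp x (s : ℝ) ^ 2
  cadlag_xe : ∀ ε : ℝ, 0 < ε → Cadlag (xe ε)
  bv_xe : ∀ ε : ℝ, 0 < ε → LocBV (xe ε)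
  approx : ∀ ε : ℝ, 0 < ε → ∀ s : ℝ, 0 ≤ s → |x s - xe ε s| ≤ ε
  qv_unif : ∀ T : ℝ, 0 ≤ T →
    TendstoUniformlyOn (fun ε s => 2 * lsInt (xe ε) (fun r => x r - xe ε r) s) q
      (𝓝[>] 0) (Icc 0 T)
  bdd : ∀ t : ℝ, 0 < t → ∃ C : ℝ, ∀ ε : ℝ, 0 < ε →
    lsAbs (xe ε) (fun r => x r - xe ε r) t ≤ C
  jump_bdd : ∃ K : ℝ, ∀ ε : ℝ, 0 < ε → ∀ s : ℝ, 0 < s → |jmp (xe ε) s| ≤ K * |jmp x s|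

/-!
The integral `F s = ∫_{(0,s]} (x - xᵉ) dxᵉ` jumps exactly at the atoms of the
Lebesgue–Stieltjes measure of `xᵉ`, so `ΔF_s = (x_s - xᵉ_s) Δxᵉ_s`. The first factor is at most
`ε`. Since `xᵉ` stays within `ε` of `x` both at `s` and just before it, `Δxᵉ_s` differs from
`Δx_s` by at most `2ε`. Finally `|Δx_s|` is bounded by the supremum, which is finite because a
càdlàg path is bounded on compact intervals.
-/

theorem tendsto_ceil_mul_div_nhdsGE (x : ℝ) :
    Tendsto (fun n : ℕ => (⌈x * (n + 1)⌉ : ℝ) / (n + 1)) atTop (𝓝[≥] x) := by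
  have hge : ∀ n : ℕ, x ≤ (⌈x * (n + 1)⌉ : ℝ) / (n + 1) := fun n => by
    rw [le_div_iff₀ n.cast_add_one_pos]
    exact Int.le_ceil _
  have hle : ∀ n : ℕ, (⌈x * (n + 1)⌉ : ℝ) / (n + 1) ≤ x + 1 / (n + 1) := fun n => by
    rw [div_le_iff₀ n.cast_add_one_pos, add_mul, one_div_mul_cancel n.cast_add_one_pos.ne']
    exact (Int.ceil_lt_add_one _).le
  have hlim : Tendsto (fun n : ℕ => x + 1 / ((n : ℝ) + 1)) atTop (𝓝 x) := by
    simpa using tendsto_one_div_add_atTop_nhds_zero_nat.const_add x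
  exact tendsto_nhdsWithin_of_tendsto_nhds_of_eventually_within _
    (tendsto_of_tendsto_of_tendsto_of_le_of_le tendsto_const_nhds hlim hge hle)
    (Eventually.of_forall hge)

theorem measurable_of_continuousWithinAt_Ici {β : Type*} [TopologicalSpace β]
    [TopologicalSpace.PseudoMetrizableSpace β] [MeasurableSpace β] [BorelSpace β] {f : ℝ → β}
    (hf : ∀ x, ContinuousWithinAt f (Ici x) x) : Measurable f := by
  -- `f` is the pointwise limit of `x ↦ f (⌈x (n + 1)⌉ / (n + 1))`, which factor through `ℤ`.
  refine measurable_of_tendsto_metrizable (fun n => ?_)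
    (tendsto_pi_nhds.2 fun x => (hf x).tendsto.comp (tendsto_ceil_mul_div_nhdsGE x))
  exact (measurable_of_countable fun k : ℤ => f (k / (n + 1))).comp
    (Int.measurable_ceil.comp (measurable_id.mul_const _))

theorem integrableOn_of_measurable_comp_coe {α : Type*} [MeasurableSpace α] {μ : Measure α}
    {S : Set α} (hS : MeasurableSet S) (hμS : μ S < ⊤) {g : α → ℝ}
    (hgm : Measurable (g ∘ ((↑) : S → α))) {C : ℝ} (hgb : ∀ u ∈ S, |g u| ≤ C) :
    IntegrableOn g S μ :=
  ⟨((aemeasurable_restrict_iff_comap_subtype hS).2 hgm.aemeasurable).aestronglyMeasurable,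
    .restrict_of_bounded C hμS ((ae_restrict_mem hS).mono hgb)⟩

theorem tendsto_setIntegral_Ioc_nhdsLT_Ioo {E : Type*} [NormedAddCommGroup E] [NormedSpace ℝ E]
    {μ : Measure ℝ} {g : ℝ → E} {a s : ℝ} (hg : IntegrableOn g (Ioo a s) μ) :
    Tendsto (fun r => ∫ u in Ioc a r, g u ∂μ) (𝓝[<] s) (𝓝 (∫ u in Ioo a s, g u ∂μ)) := by
  have hU : ⋃ r : Iio s, Ioc a (r : ℝ) = Ioo a s := by
    ext u
    simpa using fun _ => ⟨fun ⟨r, hrs, hur⟩ => hur.trans_lt hrs,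
      fun h => (exists_between h).imp fun r hr => ⟨hr.2, hr.1.le⟩⟩
  rw [← tendsto_comp_coe_Iio_atTop, ← hU]
  exact tendsto_setIntegral_of_monotone (fun _ => measurableSet_Ioc)
    (fun r r' h => Ioc_subset_Ioc_right h) (hU ▸ hg)

theorem setIntegral_Ioc_eq_setIntegral_Ioo_add {E : Type*} [NormedAddCommGroup E]
    [NormedSpace ℝ E] [CompleteSpace E]
    {μ : Measure ℝ} {g : ℝ → E} {a s : ℝ} (has : a < s) (hg : IntegrableOn g (Ioc a s) μ) :
    ∫ u in Ioc a s, g u ∂μ = (∫ u in Ioo a s, g u ∂μ) + μ.real {s} • g s := by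
  rw [← Ioo_union_right has, setIntegral_union (by simp) (measurableSet_singleton s)
    (hg.mono_set Ioo_subset_Ioc_self) (hg.mono_set (by simp [has])), integral_singleton]

theorem tendsto_setIntegral_Ioc_nhdsLT {E : Type*} [NormedAddCommGroup E] [NormedSpace ℝ E]
    [CompleteSpace E]
    {μ : Measure ℝ} {g : ℝ → E} {a s : ℝ} (has : a < s) (hg : IntegrableOn g (Ioc a s) μ) :
    Tendsto (fun r => ∫ u in Ioc a r, g u ∂μ) (𝓝[<] s)
      (𝓝 ((∫ u in Ioc a s, g u ∂μ) - μ.real {s} • g s)) := by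
  rw [setIntegral_Ioc_eq_setIntegral_Ioo_add has hg, add_sub_cancel_right]
  exact tendsto_setIntegral_Ioc_nhdsLT_Ioo (hg.mono_set Ioo_subset_Ioc_self)

theorem StieltjesFunction.measureReal_singleton (f : StieltjesFunction ℝ) (s : ℝ) :
    f.measure.real {s} = f s - Function.leftLim f s := by
  rw [measureReal_def, f.measure_singleton, ENNReal.toReal_ofReal
    (sub_nonneg.2 (f.mono.leftLim_le le_rfl))]

theorem StieltjesFunction.tendsto_nhdsLT (f : StieltjesFunction ℝ) (s : ℝ) :
    Tendsto f (𝓝[<] s) (𝓝 (f s - f.measure.real {s})) := by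
  rw [f.measureReal_singleton, sub_sub_cancel]
  exact f.mono.tendsto_leftLim s

theorem jmp_eq_of_tendsto {f : ℝ → ℝ} {s y : ℝ} (h : Tendsto f (𝓝[<] s) (𝓝 y)) :
    jmp f s = f s - y := by
  rw [jmp, leftLim_eq_of_tendsto h]

theorem abs_jmp_sub_jmp_le {f g : ℝ → ℝ} {s a b ε : ℝ} (hf : Tendsto f (𝓝[<] s) (𝓝 a))
    (hg : Tendsto g (𝓝[<] s) (𝓝 b)) (hs : |f s - g s| ≤ ε)
    (hlt : ∀ᶠ u in 𝓝[<] s, |f u - g u| ≤ ε) :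
    |jmp f s - jmp g s| ≤ 2 * ε := by
  have hab : |a - b| ≤ ε := le_of_tendsto (hf.sub hg).abs hlt
  rw [jmp_eq_of_tendsto hf, jmp_eq_of_tendsto hg]
  calc |f s - a - (g s - b)| = |(f s - g s) - (a - b)| := by ring_nf
    _ ≤ |f s - g s| + |a - b| := abs_sub _ _
    _ ≤ 2 * ε := by linarith

theorem IsCompact.bddAbove_image_of_isBoundedUnder {X Y : Type*} [TopologicalSpace X]
    [SemilatticeSup Y] [Nonempty Y] {f : X → Y} {K : Set X} (hK : IsCompact K)
    (hf : ∀ u ∈ K, IsBoundedUnder (· ≤ ·) (𝓝[K] u) f) : BddAbove (f '' K) := by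
  refine hK.induction_on (p := fun S => BddAbove (f '' S)) (by simp)
    (fun S T hST hT => hT.mono (image_mono hST))
    (fun S T hS hT => by rw [image_union]; exact hS.union hT) fun u hu => ?_
  obtain ⟨b, hb⟩ := hf u hu
  exact ⟨_, hb, b, forall_mem_image.2 fun v hv => hv⟩

namespace Cadlag

variable {f : ℝ → ℝ}

theorem isBoundedUnder_abs (hf : Cadlag f) {u : ℝ} (hu : 0 ≤ u) :
    IsBoundedUnder (· ≤ ·) (𝓝[Ici 0] u) fun v => |f v| := by
  rcases hu.eq_or_lt with rfl | hu
  · exact (hf.1 0 le_rfl).tendsto.abs.isBoundedUnder_le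
  · have h := isBounded_sup (hf.2 u hu).abs.isBoundedUnder_le
      (hf.1 u hu.le).tendsto.abs.isBoundedUnder_le
    rw [← map_sup, nhdsLT_sup_nhdsGE] at h
    exact h.mono (map_mono nhdsWithin_le_nhds)

theorem bddAbove_abs_jmp (hf : Cadlag f) (t : ℝ) :
    BddAbove (range fun u : Ioc (0 : ℝ) t => |jmp f u|) := by
  obtain ⟨M, hM⟩ := isCompact_Icc.bddAbove_image_of_isBoundedUnder fun u hu =>
    (hf.isBoundedUnder_abs hu.1).mono (nhdsWithin_mono _ Icc_subset_Ici_self)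
  refine ⟨2 * M, forall_mem_range.2 fun u => ?_⟩
  obtain ⟨hu0, hut⟩ := u.2
  have hfu : |f u| ≤ M := hM (mem_image_of_mem _ ⟨hu0.le, hut⟩)
  have hleft : |Function.leftLim f u| ≤ M := by
    refine le_of_tendsto (hf.2 u hu0).abs ?_
    filter_upwards [Ioo_mem_nhdsLT hu0] with v hv
    exact hM (mem_image_of_mem _ ⟨hv.1.le, hv.2.le.trans hut⟩)
  calc |jmp f u| ≤ |f u| + |Function.leftLim f u| := abs_sub _ _
    _ ≤ 2 * M := by linarith

theorem measurable_comp_coe (hf : Cadlag f) {S : Set ℝ} (hS : S ⊆ Ici 0) :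
    Measurable (f ∘ ((↑) : S → ℝ)) := by
  have hmax : Measurable fun v => f (max v 0) :=
    measurable_of_continuousWithinAt_Ici fun v =>
      ContinuousWithinAt.comp (f := fun v => max v 0) (hf.1 _ (le_max_right v 0))
        (continuous_id.max continuous_const).continuousWithinAt
        fun _ hw => mem_Ici.2 (max_le_max_right 0 hw)
  convert hmax.comp measurable_subtype_coe using 1
  ext ⟨v, hv⟩
  simp [max_eq_left (mem_Ici.1 (hS hv))]

end Cadlag

namespace IsBVDecompOn

variable {y : ℝ → ℝ} {p : StieltjesFunction ℝ × StieltjesFunction ℝ}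

theorem measurable_comp_coe (hp : IsBVDecompOn y p) {S : Set ℝ} (hS : S ⊆ Ici 0) :
    Measurable (y ∘ ((↑) : S → ℝ)) := by
  convert (p.1.mono.measurable.sub p.2.mono.measurable).comp measurable_subtype_coe using 1
  ext ⟨v, hv⟩
  exact hp v (hS hv)

theorem tendsto_nhdsLT (hp : IsBVDecompOn y p) {s : ℝ} (hs : 0 < s) :
    Tendsto y (𝓝[<] s) (𝓝 (y s - (p.1.measure.real {s} - p.2.measure.real {s}))) := by
  have h := (p.1.tendsto_nhdsLT s).sub (p.2.tendsto_nhdsLT s)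
  rw [hp s hs.le]
  convert h.congr' ?_ using 2
  · ring
  · filter_upwards [Ioo_mem_nhdsLT hs] with u hu
    exact (hp u hu.1.le).symm

theorem jmp_eq (hp : IsBVDecompOn y p) {s : ℝ} (hs : 0 < s) :
    jmp y s = p.1.measure.real {s} - p.2.measure.real {s} := by
  rw [jmp_eq_of_tendsto (hp.tendsto_nhdsLT hs), sub_sub_cancel]

end IsBVDecompOn

theorem tendsto_lsInt_nhdsLT {y g : ℝ → ℝ} {s C : ℝ} (hs : 0 < s) (hy : LocBV y)
    (hgm : Measurable (g ∘ ((↑) : Ioc (0 : ℝ) s → ℝ))) (hgb : ∀ u ∈ Ioc 0 s, |g u| ≤ C) :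
    Tendsto (lsInt y g) (𝓝[<] s) (𝓝 (lsInt y g s - g s * jmp y s)) := by
  have hint (f : StieltjesFunction ℝ) : IntegrableOn g (Ioc 0 s) f.measure :=
    integrableOn_of_measurable_comp_coe measurableSet_Ioc measure_Ioc_lt_top hgm hgb
  have hF : lsInt y g = fun r => (∫ u in Ioc 0 r, g u ∂hy.choose.1.measure) -
      ∫ u in Ioc 0 r, g u ∂hy.choose.2.measure := funext fun r => dif_pos hy
  rw [hF, hy.choose_spec.jmp_eq hs]
  convert (tendsto_setIntegral_Ioc_nhdsLT hs (hint _)).sub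
    (tendsto_setIntegral_Ioc_nhdsLT hs (hint _)) using 2
  simp only [smul_eq_mul]
  ring

theorem statement5_general (x xe : ℝ → ℝ) (ε : ℝ)
    (hx : Cadlag x) (hbv : LocBV xe)
    (happ : ∀ s : ℝ, 0 ≤ s → |x s - xe s| ≤ ε)
    (t : ℝ) (s : ℝ) (hs : s ∈ Ioc (0:ℝ) t) :
    |jmp (fun r => 2 * lsInt xe (fun u => x u - xe u) r) s| ≤
      2 * ε * ((⨆ u : Ioc (0:ℝ) t, |jmp x (u : ℝ)|) + 2 * ε) := by
  obtain ⟨hs0, hst⟩ := hs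
  have hxe := hbv.choose_spec
  have hIoc : Ioc 0 s ⊆ Ici (0 : ℝ) := Ioc_subset_Ioi_self.trans Ioi_subset_Ici_self
  have hgm : Measurable ((fun u => x u - xe u) ∘ ((↑) : Ioc (0 : ℝ) s → ℝ)) :=
    (hx.measurable_comp_coe hIoc).sub (hxe.measurable_comp_coe hIoc)
  have hjump : jmp (fun r => 2 * lsInt xe (fun u => x u - xe u) r) s =
      2 * ((x s - xe s) * jmp xe s) := by
    have hlim := tendsto_lsInt_nhdsLT hs0 hbv hgm fun u hu => happ u hu.1.le
    rw [jmp_eq_of_tendsto (hlim.const_mul 2)]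
    ring
  have hjxe : |jmp xe s| ≤ |jmp x s| + 2 * ε := by
    have := abs_jmp_sub_jmp_le (hx.2 s hs0) (hxe.tendsto_nhdsLT hs0) (happ s hs0.le)
      (by filter_upwards [Ioo_mem_nhdsLT hs0] with u hu using happ u hu.1.le)
    linarith [abs_sub_abs_le_abs_sub (jmp xe s) (jmp x s), abs_sub_comm (jmp xe s) (jmp x s)]
  have hsup : |jmp x s| ≤ ⨆ u : Ioc (0 : ℝ) t, |jmp x (u : ℝ)| :=
    le_ciSup (hx.bddAbove_abs_jmp t) ⟨s, hs0, hst⟩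
  have hε : 0 ≤ ε := (abs_nonneg _).trans (happ 0 le_rfl)
  rw [hjump, abs_mul, abs_mul, abs_two, mul_assoc]
  gcongr
  · exact happ s hs0.le
  · linarith

/-- jumps of `s ↦ ⟨x⟩ᵉ_s = 2∫_{(0,s]} (x - xᵉ) dxᵉ` on `(0,t]` are bounded by
`2ε (sup_{0<u≤t} |Δx_u| + 2ε)`. -/
theorem statement5 (x xe : ℝ → ℝ) (ε : ℝ) (hε : 0 < ε)
    (hx : Cadlag x) (hxe : Cadlag xe) (hbv : LocBV xe)
    (happ : ∀ s : ℝ, 0 ≤ s → |x s - xe s| ≤ ε)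
    (t : ℝ) (ht : 0 < t) (s : ℝ) (hs : s ∈ Ioc (0:ℝ) t) :
    |jmp (fun r => 2 * lsInt xe (fun u => x u - xe u) r) s| ≤
      2 * ε * ((⨆ u : Ioc (0:ℝ) t, |jmp x (u : ℝ)|) + 2 * ε) :=
  statement5_general x xe ε hx hbv happ t s hs
end
end

section
/- Let x: [0,∞) → ℝ be càdlàg with Σ_{0<s≤t} (Δx_s)² < ∞ for a fixed t > 0, let (x^ε)_{ε>0} be càdlàg paths with sup_{s≥0} |x_s − x^ε_s| ≤ ε and |Δx^ε_s| ≤ K |Δx_s| for all s > 0 and ε > 0 and some constant K, and let f: ℝ → ℝ be continuously differentiable with antiderivative F. Then each of the sums below converges absolutely and Σ_{0<s≤t} ( F(x^ε_s) − F(x^ε_{s−}) − f(x^ε_{s−}) Δx^ε_s ) → Σ_{0<s≤t} ( F(x_s) − F(x_{s−}) − f(x_{s−}) Δx_s ) as ε → 0+. -/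
open MeasureTheory Filter Topology Set
open scoped Classical

noncomputable section

/-!
On an interval where `‖f'‖ ≤ L`, Taylor's formula gives
`|F b - F a - f a (b - a)| ≤ L (b - a)²`. A càdlàg path and its left limits are bounded on
`[0, t]`, and for `ε ≤ 1` the values and left limits of `xe ε` stay within `1` of those of `x`,
so every summand, for `x` and for all `xe ε` with `ε ≤ 1`, is dominated by `L K² (Δx_s)²`,
which is summable. Each summand converges as `ε → 0+` because `xe ε s → x s` and
`(xe ε)(s-) → x(s-)`, and dominated convergence for series gives the limit.
-/

theorem abs_sub_sub_mul_sub_le_mul_sq {f f' F : ℝ → ℝ} {s : Set ℝ} {L a b : ℝ}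
    (hs : Convex ℝ s) (hf : ∀ y ∈ s, HasDerivWithinAt f (f' y) s y)
    (hF : ∀ y ∈ s, HasDerivWithinAt F (f y) s y) (hL : ∀ y ∈ s, ‖f' y‖ ≤ L)
    (ha : a ∈ s) (hb : b ∈ s) :
    |F b - F a - f a * (b - a)| ≤ L * (b - a) ^ 2 := by
  have hL0 : 0 ≤ L := (norm_nonneg _).trans (hL a ha)
  have hab : uIcc a b ⊆ s := segment_eq_uIcc a b ▸ hs.segment_subset ha hb
  have hg : ∀ u ∈ uIcc a b,
      HasDerivWithinAt (fun u => F u - f a * u) (f u - f a) (uIcc a b) u := fun u hu => by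
    have h := ((hF u (hab hu)).mono hab).sub ((hasDerivWithinAt_id u _).const_mul (f a))
    rwa [mul_one] at h
  have hg' : ∀ u ∈ uIcc a b, ‖f u - f a‖ ≤ L * |b - a| := fun u hu =>
    calc ‖f u - f a‖ ≤ L * ‖u - a‖ := hs.norm_image_sub_le_of_norm_hasDerivWithin_le hf hL ha (hab hu)
      _ ≤ L * |b - a| := mul_le_mul_of_nonneg_left (abs_sub_left_of_mem_uIcc hu) hL0
  calc |F b - F a - f a * (b - a)| = ‖(F b - f a * b) - (F a - f a * a)‖ := by
        rw [Real.norm_eq_abs]; ring_nf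
    _ ≤ L * |b - a| * ‖b - a‖ := (convex_uIcc a b).norm_image_sub_le_of_norm_hasDerivWithin_le
        hg hg' left_mem_uIcc right_mem_uIcc
    _ = L * (b - a) ^ 2 := by rw [Real.norm_eq_abs, mul_assoc, ← sq, sq_abs]

theorem abs_le_add_of_abs_sub_le {a b M δ : ℝ} (ha : |a| ≤ M) (hab : |a - b| ≤ δ) :
    |b| ≤ M + δ :=
  (norm_le_norm_add_norm_sub a b).trans (add_le_add ha hab)

theorem le_of_tendsto_nhdsLT_of_forall_Ico_le {g : ℝ → ℝ} {s l c : ℝ} (hs : 0 < s)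
    (hg : Tendsto g (𝓝[<] s) (𝓝 l)) (hc : ∀ r ∈ Ico 0 s, g r ≤ c) : l ≤ c :=
  le_of_tendsto hg <| eventually_of_mem (Ioo_mem_nhdsLT hs) fun r hr => hc r ⟨hr.1.le, hr.2⟩

theorem tendsto_nhdsGT_zero_of_abs_sub_le {g : ℝ → ℝ} {a : ℝ} (hg : ∀ ε > 0, |a - g ε| ≤ ε) :
    Tendsto g (𝓝[>] 0) (𝓝 a) := by
  rw [tendsto_iff_dist_tendsto_zero]
  refine squeeze_zero' (Eventually.of_forall fun _ => dist_nonneg) ?_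
    (tendsto_id.mono_left nhdsWithin_le_nhds)
  filter_upwards [self_mem_nhdsWithin] with ε hε
  rw [Real.dist_eq, abs_sub_comm]
  exact hg ε hε

namespace Cadlag

variable {x y : ℝ → ℝ}

theorem abs_leftLim_sub_le (hx : Cadlag x) (hy : Cadlag y) {s ε : ℝ} (hs : 0 < s)
    (h : ∀ r, 0 ≤ r → |x r - y r| ≤ ε) :
    |Function.leftLim x s - Function.leftLim y s| ≤ ε :=
  le_of_tendsto_nhdsLT_of_forall_Ico_le hs ((hx.2 s hs).sub (hy.2 s hs)).abs
    fun r hr => h r hr.1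

theorem exists_nhds_abs_le (hx : Cadlag x) {s : ℝ} (hs : 0 ≤ s) :
    ∃ C, ∀ᶠ r in 𝓝 s, 0 ≤ r → |x r| ≤ C := by
  refine ⟨max |x s| |Function.leftLim x s| + 1, ?_⟩
  rw [← nhdsLT_sup_nhdsGE, eventually_sup]
  constructor
  · rcases hs.eq_or_lt with rfl | hs
    · filter_upwards [self_mem_nhdsWithin] with r hr hr0 using absurd hr (not_lt.2 hr0)
    · filter_upwards [(hx.2 s hs).abs.eventually (gt_mem_nhds (lt_add_one _))] with r hr _
      exact hr.le.trans (by gcongr; exact le_max_right _ _)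
  · filter_upwards [(hx.1 s hs).abs.eventually (gt_mem_nhds (lt_add_one _))] with r hr _
    exact hr.le.trans (by gcongr; exact le_max_left _ _)

theorem exists_abs_le_on_Icc (hx : Cadlag x) (t : ℝ) : ∃ M, ∀ s ∈ Icc 0 t, |x s| ≤ M := by
  choose! C hC using fun s (hs : s ∈ Icc 0 t) => hx.exists_nhds_abs_le hs.1
  obtain ⟨I, -, hcover⟩ := isCompact_Icc.elim_nhds_subcover _ hC
  obtain ⟨M, hM⟩ := (I.image C).bddAbove
  refine ⟨M, fun s hs => ?_⟩
  obtain ⟨u, hu, hsu⟩ := mem_iUnion₂.1 (hcover hs)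
  exact (hsu hs.1).trans (hM (Finset.mem_image_of_mem C hu))

theorem exists_abs_le_and_abs_leftLim_le (hx : Cadlag x) (t : ℝ) :
    ∃ M, ∀ s ∈ Ioc 0 t, |x s| ≤ M ∧ |Function.leftLim x s| ≤ M := by
  obtain ⟨M, hM⟩ := hx.exists_abs_le_on_Icc t
  refine ⟨M, fun s hs => ⟨hM s (Ioc_subset_Icc_self hs), ?_⟩⟩
  exact le_of_tendsto_nhdsLT_of_forall_Ico_le hs.1 (hx.2 s hs.1).abs
    fun r hr => hM r ⟨hr.1, hr.2.le.trans hs.2⟩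

end Cadlag

def jumpRemainder (F f y : ℝ → ℝ) (s : ℝ) : ℝ :=
  F (y s) - F (Function.leftLim y s) - f (Function.leftLim y s) * jmp y s

section JumpRemainder

variable {f f' F x y : ℝ → ℝ}

theorem abs_jumpRemainder_le (hf : ∀ z, HasDerivAt f (f' z) z) (hF : ∀ z, HasDerivAt F (f z) z)
    {R L c s : ℝ} (hL : ∀ z ∈ Icc (-R) R, ‖f' z‖ ≤ L) (hys : |y s| ≤ R)
    (hyl : |Function.leftLim y s| ≤ R) (hjump : |jmp y s| ≤ c * |jmp x s|) :
    |jumpRemainder F f y s| ≤ L * (c ^ 2 * jmp x s ^ 2) := by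
  have hL0 : 0 ≤ L := (norm_nonneg _).trans (hL _ (abs_le.1 hys))
  have hsq : jmp y s ^ 2 ≤ c ^ 2 * jmp x s ^ 2 := by
    simpa only [mul_pow, sq_abs] using pow_le_pow_left₀ (abs_nonneg _) hjump 2
  calc |jumpRemainder F f y s| ≤ L * jmp y s ^ 2 :=
        abs_sub_sub_mul_sub_le_mul_sq (convex_Icc (-R) R) (fun z _ => (hf z).hasDerivWithinAt)
          (fun z _ => (hF z).hasDerivWithinAt) hL (abs_le.1 hyl) (abs_le.1 hys)
    _ ≤ L * (c ^ 2 * jmp x s ^ 2) := mul_le_mul_of_nonneg_left hsq hL0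

theorem summable_abs_jumpRemainder (hf : ∀ z, HasDerivAt f (f' z) z) (hf' : Continuous f')
    (hF : ∀ z, HasDerivAt F (f z) z) (hy : Cadlag y) {t c : ℝ}
    (hsum : Summable fun s : Ioc (0:ℝ) t => jmp x s ^ 2)
    (hjump : ∀ s : ℝ, 0 < s → |jmp y s| ≤ c * |jmp x s|) :
    Summable fun s : Ioc (0:ℝ) t => |jumpRemainder F f y s| := by
  obtain ⟨M, hM⟩ := hy.exists_abs_le_and_abs_leftLim_le t
  obtain ⟨L, hL⟩ := (isCompact_Icc (a := -M) (b := M)).exists_bound_of_continuousOn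
    hf'.continuousOn
  refine ((hsum.mul_left (c ^ 2)).mul_left L).of_nonneg_of_le (fun _ => abs_nonneg _)
    fun s => ?_
  exact abs_jumpRemainder_le hf hF hL (hM s s.2).1 (hM s s.2).2 (hjump s s.2.1)

theorem tendsto_jumpRemainder {α : Type*} {l : Filter α} {ys : α → ℝ → ℝ} {s : ℝ}
    (hfc : Continuous f) (hFc : Continuous F) (hys : Tendsto (fun a => ys a s) l (𝓝 (x s)))
    (hyl : Tendsto (fun a => Function.leftLim (ys a) s) l (𝓝 (Function.leftLim x s))) :
    Tendsto (fun a => jumpRemainder F f (ys a) s) l (𝓝 (jumpRemainder F f x s)) :=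
  (((hFc.tendsto _).comp hys).sub ((hFc.tendsto _).comp hyl)).sub
    (((hfc.tendsto _).comp hyl).mul (hys.sub hyl))

end JumpRemainder

theorem statement10_general (t : ℝ) (x : ℝ → ℝ) (hx : Cadlag x)
    (hsum : Summable fun s : Ioc (0:ℝ) t => jmp x (s : ℝ) ^ 2)
    (xe : ℝ → ℝ → ℝ) (hcad : ∀ ε : ℝ, 0 < ε → Cadlag (xe ε))
    (happ : ∀ ε : ℝ, 0 < ε → ∀ s : ℝ, 0 ≤ s → |x s - xe ε s| ≤ ε)
    (K : ℝ) (hjump : ∀ ε : ℝ, 0 < ε → ∀ s : ℝ, 0 < s → |jmp (xe ε) s| ≤ K * |jmp x s|)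
    (f f' F : ℝ → ℝ) (hf : ∀ y, HasDerivAt f (f' y) y) (hf' : Continuous f')
    (hF : ∀ y, HasDerivAt F (f y) y) :
    (∀ ε : ℝ, 0 < ε → Summable fun s : Ioc (0:ℝ) t =>
        |F (xe ε (s : ℝ)) - F (Function.leftLim (xe ε) (s : ℝ)) -
          f (Function.leftLim (xe ε) (s : ℝ)) * jmp (xe ε) (s : ℝ)|) ∧
    (Summable fun s : Ioc (0:ℝ) t =>
        |F (x (s : ℝ)) - F (Function.leftLim x (s : ℝ)) -
          f (Function.leftLim x (s : ℝ)) * jmp x (s : ℝ)|) ∧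
    Tendsto (fun ε => ∑' s : Ioc (0:ℝ) t,
        (F (xe ε (s : ℝ)) - F (Function.leftLim (xe ε) (s : ℝ)) -
          f (Function.leftLim (xe ε) (s : ℝ)) * jmp (xe ε) (s : ℝ)))
      (𝓝[>] (0:ℝ))
      (𝓝 (∑' s : Ioc (0:ℝ) t,
        (F (x (s : ℝ)) - F (Function.leftLim x (s : ℝ)) -
          f (Function.leftLim x (s : ℝ)) * jmp x (s : ℝ)))) := by
  refine ⟨fun ε hε => summable_abs_jumpRemainder hf hf' hF (hcad ε hε) hsum (hjump ε hε),
    summable_abs_jumpRemainder (c := 1) hf hf' hF hx hsum fun s _ => (one_mul _).ge, ?_⟩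
  have hleftLim (ε : ℝ) (hε : 0 < ε) (s : Ioc (0:ℝ) t) :
      |Function.leftLim x s - Function.leftLim (xe ε) s| ≤ ε :=
    hx.abs_leftLim_sub_le (hcad ε hε) s.2.1 (happ ε hε)
  obtain ⟨M, hM⟩ := hx.exists_abs_le_and_abs_leftLim_le t
  obtain ⟨L, hL⟩ := (isCompact_Icc (a := -(M + 1)) (b := M + 1)).exists_bound_of_continuousOn
    hf'.continuousOn
  have hfc : Continuous f := Differentiable.continuous fun y => (hf y).differentiableAt
  have hFc : Continuous F := Differentiable.continuous fun y => (hF y).differentiableAt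
  refine tendsto_tsum_of_dominated_convergence ((hsum.mul_left (K ^ 2)).mul_left L)
    (fun s => tendsto_jumpRemainder hfc hFc ?_ ?_) ?_
  · exact tendsto_nhdsGT_zero_of_abs_sub_le fun ε hε => happ ε hε s s.2.1.le
  · exact tendsto_nhdsGT_zero_of_abs_sub_le fun ε hε => hleftLim ε hε s
  · filter_upwards [Ioc_mem_nhdsGT zero_lt_one] with ε ⟨hε0, hε1⟩ s
    exact abs_jumpRemainder_le hf hF hL
      ((abs_le_add_of_abs_sub_le (hM s s.2).1 (happ ε hε0 s s.2.1.le)).trans (by linarith))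
      ((abs_le_add_of_abs_sub_le (hM s s.2).2 (hleftLim ε hε0 s)).trans (by linarith))
      (hjump ε hε0 s s.2.1)

/-- convergence of the compensator jump sums (left-endpoint version). -/
theorem statement10 (t : ℝ) (ht : 0 < t) (x : ℝ → ℝ) (hx : Cadlag x)
    (hsum : Summable fun s : Ioc (0:ℝ) t => jmp x (s : ℝ) ^ 2)
    (xe : ℝ → ℝ → ℝ) (hcad : ∀ ε : ℝ, 0 < ε → Cadlag (xe ε))
    (happ : ∀ ε : ℝ, 0 < ε → ∀ s : ℝ, 0 ≤ s → |x s - xe ε s| ≤ ε)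
    (K : ℝ) (hjump : ∀ ε : ℝ, 0 < ε → ∀ s : ℝ, 0 < s → |jmp (xe ε) s| ≤ K * |jmp x s|)
    (f f' F : ℝ → ℝ) (hf : ∀ y, HasDerivAt f (f' y) y) (hf' : Continuous f')
    (hF : ∀ y, HasDerivAt F (f y) y) :
    (∀ ε : ℝ, 0 < ε → Summable fun s : Ioc (0:ℝ) t =>
        |F (xe ε (s : ℝ)) - F (Function.leftLim (xe ε) (s : ℝ)) -
          f (Function.leftLim (xe ε) (s : ℝ)) * jmp (xe ε) (s : ℝ)|) ∧
    (Summable fun s : Ioc (0:ℝ) t =>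
        |F (x (s : ℝ)) - F (Function.leftLim x (s : ℝ)) -
          f (Function.leftLim x (s : ℝ)) * jmp x (s : ℝ)|) ∧
    Tendsto (fun ε => ∑' s : Ioc (0:ℝ) t,
        (F (xe ε (s : ℝ)) - F (Function.leftLim (xe ε) (s : ℝ)) -
          f (Function.leftLim (xe ε) (s : ℝ)) * jmp (xe ε) (s : ℝ)))
      (𝓝[>] (0:ℝ))
      (𝓝 (∑' s : Ioc (0:ℝ) t,
        (F (x (s : ℝ)) - F (Function.leftLim x (s : ℝ)) -
          f (Function.leftLim x (s : ℝ)) * jmp x (s : ℝ)))) :=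
  statement10_general t x hx hsum xe hcad happ K hjump f f' F hf hf' hF
end
end
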